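/- Let X be a vector space with a complete invariant metric d satisfying d(λx, λy) ≤ λ d(x,y) for λ ∈ [0,1). If f : [a,b] → X is bounded and continuous almost everywhere on [a,b], then f is Riemann integrable on [a,b]. -/

import Mathlib

/-!
Write the Riemann sums of two `δ`-fine tagged partitions `P`, `Q` over their common refinement:
both become sums over the cells `Iᵢ ∩ Jₖ` with the same weights `|Iᵢ ∩ Jₖ| ∈ [0, 1)`, so
invariance and the scaling inequality bound their distance by `∑ |Iᵢ ∩ Jₖ| d(f sᵢ, f s'ₖ)`.
Cover the discontinuities by an open set `U` of small measure. On cells meeting the compact set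
`[a,b] \ U` both tags are `δ`-close to a point where `f` is continuous, which makes
`d(f sᵢ, f s'ₖ)` uniformly small; the other cells lie in `U`, so their total length is small,
and `f` is bounded there. Hence the Riemann sums are Cauchy as the mesh tends to zero, and
converge by completeness.
-/

open Set MeasureTheory

/-- A tagged partition of `[a,b]`: points `a = t 0 < t 1 < ⋯ < t n = b`
with tags `s i ∈ [t i, t (i+1)]`. -/
structure TaggedPartition (a b : ℝ) where
  n : ℕ
  t : ℕ → ℝ
  s : ℕ → ℝ
  npos : 0 < n
  left : t 0 = a
  right : t n = b
  mono : ∀ i < n, t i < t (i + 1)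
  tag_mem : ∀ i < n, s i ∈ Set.Icc (t i) (t (i + 1))

/-- The mesh of the partition is `< δ`. -/
def TaggedPartition.MeshLT {a b : ℝ} (P : TaggedPartition a b) (δ : ℝ) : Prop :=
  ∀ i < P.n, P.t (i + 1) - P.t i < δ

/-- The set of partition points of a tagged partition. -/
def TaggedPartition.points {a b : ℝ} (P : TaggedPartition a b) : Set ℝ :=
  {x | ∃ i ≤ P.n, P.t i = x}

/-- The Riemann sum `f(Δ) = Σᵢ (tᵢ₊₁ - tᵢ) • f(sᵢ)`. -/
def riemannSum {X : Type*} [AddCommGroup X] [Module ℝ X]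
    (f : ℝ → X) {a b : ℝ} (P : TaggedPartition a b) : X :=
  ∑ i ∈ Finset.range P.n, (P.t (i + 1) - P.t i) • f (P.s i)

/-- `f` has Riemann integral `x` on `[a,b]` (mesh-based definition, metric `dist`). -/
def HasRiemannIntegral {X : Type*} [MetricSpace X] [AddCommGroup X] [Module ℝ X]
    (f : ℝ → X) (a b : ℝ) (x : X) : Prop :=
  ∀ ε > 0, ∃ δ > 0, ∀ P : TaggedPartition a b, P.MeshLT δ →
    dist (riemannSum f P) x < ε

open Filter Topology

namespace TaggedPartition

variable {a b : ℝ} (P : TaggedPartition a b)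

theorem t_mono {i j : ℕ} (hij : i ≤ j) (hj : j ≤ P.n) : P.t i ≤ P.t j :=
  (strictMonoOn_Iic_of_lt_succ P.mono).monotoneOn (hij.trans hj) hj hij

theorem t_mem_Icc {i : ℕ} (hi : i ≤ P.n) : P.t i ∈ Icc a b :=
  ⟨P.left.symm.trans_le (P.t_mono (Nat.zero_le i) hi), (P.t_mono hi le_rfl).trans_eq P.right⟩

theorem s_mem_Icc {i : ℕ} (hi : i < P.n) : P.s i ∈ Icc a b :=
  ⟨(P.t_mem_Icc hi.le).1.trans (P.tag_mem i hi).1, (P.tag_mem i hi).2.trans (P.t_mem_Icc hi).2⟩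

def piece (i : ℕ) : Set ℝ := Ico (P.t i) (P.t (i + 1))

theorem piece_subset_Ico {i : ℕ} (hi : i < P.n) : P.piece i ⊆ Ico a b :=
  Ico_subset_Ico (P.t_mem_Icc hi.le).1 (P.t_mem_Icc hi).2

theorem measurableSet_piece (i : ℕ) : MeasurableSet (P.piece i) := measurableSet_Ico

theorem measureReal_piece {i : ℕ} (hi : i < P.n) : volume.real (P.piece i) = P.t (i + 1) - P.t i :=
  Real.volume_real_Ico_of_le (P.mono i hi).le

theorem pairwiseDisjoint_piece : (↑(Finset.range P.n) : Set ℕ).PairwiseDisjoint P.piece := by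
  intro i hi j hj hij
  simp only [Finset.coe_range, mem_Iio] at hi hj
  wlog hlt : i < j generalizing i j
  · exact (this hij.symm hj hi (by omega)).symm
  exact Ico_disjoint_Ico.mpr ((min_le_left _ _).trans
    ((P.t_mono (show i + 1 ≤ j by omega) hj.le).trans (le_max_right _ _)))

theorem biUnion_piece : ⋃ i ∈ Finset.range P.n, P.piece i = Ico a b := by
  suffices h : ∀ m ≤ P.n, ⋃ i ∈ Finset.range m, P.piece i = Ico (P.t 0) (P.t m) by
    rw [h P.n le_rfl, P.left, P.right]
  intro m hm
  induction m with
  | zero => simp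
  | succ m ih =>
    rw [Finset.range_add_one, Finset.set_biUnion_insert, ih (by omega), union_comm]
    exact Ico_union_Ico_eq_Ico (P.t_mono (Nat.zero_le m) (by omega))
      (P.mono m (by omega)).le

theorem sum_measureReal_inter_piece {A : Set ℝ} (hA : MeasurableSet A) (hAab : A ⊆ Ico a b) :
    ∑ i ∈ Finset.range P.n, volume.real (A ∩ P.piece i) = volume.real A := by
  rw [← measureReal_biUnion_finset
    (P.pairwiseDisjoint_piece.mono fun _ ↦ inter_subset_right)
    (fun i _ ↦ hA.inter (P.measurableSet_piece i))
    (fun i _ ↦ measure_ne_top_of_subset (inter_subset_left.trans hAab) measure_Ico_lt_top.ne),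
    ← inter_iUnion₂, biUnion_piece, inter_eq_left.mpr hAab]

theorem sum_measureReal_piece_inter (Q : TaggedPartition a b) {i : ℕ} (hi : i < P.n) :
    ∑ k ∈ Finset.range Q.n, volume.real (P.piece i ∩ Q.piece k) = P.t (i + 1) - P.t i := by
  rw [Q.sum_measureReal_inter_piece (P.measurableSet_piece i) (P.piece_subset_Ico hi),
    P.measureReal_piece hi]

theorem sum_measureReal_inter_le (Q : TaggedPartition a b) {T : Finset (ℕ × ℕ)}
    (hT : T ⊆ Finset.range P.n ×ˢ Finset.range Q.n) {V : Set ℝ} (hV : volume V ≠ ⊤)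
    (hTV : ∀ p ∈ T, P.piece p.1 ∩ Q.piece p.2 ⊆ V) :
    ∑ p ∈ T, volume.real (P.piece p.1 ∩ Q.piece p.2) ≤ volume.real V := by
  have hdisj : (↑T : Set (ℕ × ℕ)).PairwiseDisjoint fun p ↦ P.piece p.1 ∩ Q.piece p.2 := by
    intro p hp q hq hpq
    obtain ⟨hp1, hp2⟩ := Finset.mem_product.mp (hT hp)
    obtain ⟨hq1, hq2⟩ := Finset.mem_product.mp (hT hq)
    by_cases h1 : p.1 = q.1
    · exact (Q.pairwiseDisjoint_piece hp2 hq2 fun h2 ↦ hpq (Prod.ext h1 h2)).mono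
        inter_subset_right inter_subset_right
    · exact (P.pairwiseDisjoint_piece hp1 hq1 h1).mono inter_subset_left inter_subset_left
  rw [← measureReal_biUnion_finset hdisj
    (fun p _ ↦ (P.measurableSet_piece _).inter (Q.measurableSet_piece _))
    (fun p hp ↦ measure_ne_top_of_subset (hTV p hp) hV)]
  exact measureReal_mono (iUnion₂_subset hTV) hV

theorem dist_s_lt_of_mem_piece {δ : ℝ} (hP : P.MeshLT δ) {i : ℕ} (hi : i < P.n) {z : ℝ}
    (hz : z ∈ P.piece i) : dist (P.s i) z < δ := by
  have := hP i hi
  have := P.tag_mem i hi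
  rw [Real.dist_eq, abs_lt]
  exact ⟨by linarith [hz.2, this.1], by linarith [hz.1, this.2]⟩

theorem exists_meshLT (hab : a < b) {δ : ℝ} (hδ : 0 < δ) : ∃ P : TaggedPartition a b, P.MeshLT δ := by
  obtain ⟨n, hn⟩ := exists_nat_gt ((b - a) / δ)
  have hn0 : (0 : ℝ) < n := (div_pos (sub_pos.2 hab) hδ).trans hn
  have hh : 0 < (b - a) / n := div_pos (sub_pos.2 hab) hn0
  have hstep (i : ℕ) : a + ((i + 1 : ℕ) : ℝ) * ((b - a) / n) - (a + i * ((b - a) / n)) = (b - a) / n := by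
    push_cast; ring
  refine ⟨⟨n, fun i ↦ a + i * ((b - a) / n), fun i ↦ a + i * ((b - a) / n), by exact_mod_cast hn0,
    by simp, by field_simp; ring, fun i _ ↦ by linarith [hstep i],
    fun i _ ↦ ⟨le_rfl, by linarith [hstep i]⟩⟩, fun i _ ↦ ?_⟩
  rw [hstep, div_lt_iff₀ hn0]
  rwa [div_lt_iff₀ hδ, mul_comm] at hn

def fine (a b : ℝ) : Filter (TaggedPartition a b) := ⨅ δ > 0, 𝓟 {P | P.MeshLT δ}

theorem MeshLT.mono {P : TaggedPartition a b} {δ δ' : ℝ} (hP : P.MeshLT δ)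
    (h : δ ≤ δ') : P.MeshLT δ' :=
  fun i hi ↦ (hP i hi).trans_le h

theorem hasBasis_fine (a b : ℝ) :
    (fine a b).HasBasis (fun δ : ℝ ↦ 0 < δ) fun δ ↦ {P | P.MeshLT δ} :=
  hasBasis_biInf_principal' (fun δ hδ δ' hδ' ↦ ⟨min δ δ', lt_min hδ hδ',
    fun _ hP ↦ MeshLT.mono hP (min_le_left _ _), fun _ hP ↦ MeshLT.mono hP (min_le_right _ _)⟩)
    ⟨1, one_pos⟩

theorem fine_neBot (hab : a < b) : (fine a b).NeBot :=
  (hasBasis_fine a b).neBot_iff.mpr fun hδ ↦ exists_meshLT hab hδ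

end TaggedPartition

open TaggedPartition

section RiemannIntegral

variable {X : Type*} [MetricSpace X] [AddCommGroup X] [Module ℝ X]

theorem hasRiemannIntegral_iff_tendsto {f : ℝ → X} {a b : ℝ} {x : X} :
    HasRiemannIntegral f a b x ↔ Tendsto (riemannSum f) (fine a b) (𝓝 x) :=
  ((hasBasis_fine a b).tendsto_iff Metric.nhds_basis_ball).symm

theorem exists_hasRiemannIntegral_of_cauchy [CompleteSpace X] {f : ℝ → X} {a b : ℝ} (hab : a < b)
    (h : ∀ ε > 0, ∃ δ > 0, ∀ P Q : TaggedPartition a b, P.MeshLT δ → Q.MeshLT δ →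
      dist (riemannSum f P) (riemannSum f Q) < ε) :
    ∃ x, HasRiemannIntegral f a b x := by
  have := fine_neBot hab
  simp_rw [hasRiemannIntegral_iff_tendsto, ← cauchy_map_iff_exists_tendsto,
    Metric.cauchy_iff, ((hasBasis_fine a b).map _).mem_iff]
  refine ⟨inferInstance, fun ε hε ↦ ?_⟩
  obtain ⟨δ, hδ, hPQ⟩ := h ε hε
  exact ⟨_, ⟨δ, hδ, subset_rfl⟩, by
    rintro _ ⟨P, hP, rfl⟩ _ ⟨Q, hQ, rfl⟩
    exact hPQ P Q hP hQ⟩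

end RiemannIntegral

theorem dist_add_add_le_of_invariant {X : Type*} [PseudoMetricSpace X] [AddCommMagma X]
    (hinv : ∀ x y z : X, dist (x + z) (y + z) = dist x y)
    (x y z w : X) : dist (x + z) (y + w) ≤ dist x y + dist z w :=
  calc dist (x + z) (y + w) ≤ dist (x + z) (y + z) + dist (z + y) (w + y) := by
        rw [add_comm z y, add_comm w y]; exact dist_triangle _ _ _
    _ = dist x y + dist z w := by rw [hinv, hinv]

theorem dist_sum_smul_le {ι X : Type*} [PseudoMetricSpace X] [AddCommMonoid X] [SMul ℝ X]
    (hinv : ∀ x y z : X, dist (x + z) (y + z) = dist x y)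
    (hscale : ∀ l : ℝ, 0 ≤ l → l < 1 → ∀ x y : X, dist (l • x) (l • y) ≤ l * dist x y)
    (s : Finset ι) (c : ι → ℝ) (hc : ∀ i ∈ s, 0 ≤ c i ∧ c i < 1) (x y : ι → X) :
    dist (∑ i ∈ s, c i • x i) (∑ i ∈ s, c i • y i) ≤ ∑ i ∈ s, c i * dist (x i) (y i) := by
  classical
  induction s using Finset.induction_on with
  | empty => simp
  | insert i s hi ih =>
    rw [Finset.sum_insert hi, Finset.sum_insert hi, Finset.sum_insert hi]
    have hci := hc i (Finset.mem_insert_self i s)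
    exact (dist_add_add_le_of_invariant hinv _ _ _ _).trans (add_le_add
      (hscale _ hci.1 hci.2 _ _) (ih fun j hj ↦ hc j (Finset.mem_insert_of_mem hj)))

theorem IsCompact.exists_forall_dist_lt_of_continuousWithinAt {α β : Type*}
    [PseudoMetricSpace α] [PseudoMetricSpace β] {f : α → β} {s K : Set α} (hK : IsCompact K)
    (hf : ∀ z ∈ K, ContinuousWithinAt f s z) {ε : ℝ} (hε : 0 < ε) :
    ∃ δ > 0, ∀ z ∈ K, ∀ p ∈ s, ∀ q ∈ s, dist p z < δ → dist q z < δ → dist (f p) (f q) < ε := by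
  have hr : ∀ z ∈ K, ∃ r > 0, ∀ y ∈ s, dist y z < r → dist (f y) (f z) < ε / 2 :=
    fun z hz ↦ Metric.continuousWithinAt_iff.mp (hf z hz) _ (half_pos hε)
  choose! r hr_pos hr using hr
  obtain ⟨δ, hδ, hcover⟩ := lebesgue_number_lemma_of_metric hK
    (c := fun z : K ↦ Metric.ball (z : α) (r z)) (fun _ ↦ Metric.isOpen_ball)
    (fun z hz ↦ mem_iUnion.mpr ⟨⟨z, hz⟩, Metric.mem_ball_self (hr_pos z hz)⟩)
  refine ⟨δ, hδ, fun z hz p hp q hq hpz hqz ↦ ?_⟩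
  obtain ⟨⟨w, hw⟩, hball⟩ := hcover z hz
  have hpw := hr w hw p hp (hball hpz)
  have hqw := hr w hw q hq (hball hqz)
  calc dist (f p) (f q) ≤ dist (f p) (f w) + dist (f q) (f w) := dist_triangle_right _ _ _
    _ < ε := by linarith

section RiemannSum

variable {X : Type*} [AddCommGroup X] [Module ℝ X] {a b : ℝ}

theorem riemannSum_eq_sum_measureReal_inter (f : ℝ → X) (P Q : TaggedPartition a b) :
    riemannSum f P = ∑ i ∈ Finset.range P.n, ∑ k ∈ Finset.range Q.n,
      volume.real (P.piece i ∩ Q.piece k) • f (P.s i) := by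
  refine Finset.sum_congr rfl fun i hi ↦ ?_
  rw [← Finset.sum_smul, P.sum_measureReal_piece_inter Q (Finset.mem_range.mp hi)]

theorem sum_sum_measureReal_inter (P Q : TaggedPartition a b) :
    ∑ i ∈ Finset.range P.n, ∑ k ∈ Finset.range Q.n, volume.real (P.piece i ∩ Q.piece k) = b - a := by
  rw [Finset.sum_congr rfl fun i hi ↦ P.sum_measureReal_piece_inter Q (Finset.mem_range.mp hi),
    Finset.sum_range_sub, P.right, P.left]

end RiemannSum

theorem dist_riemannSum_le_sum {X : Type*} [MetricSpace X] [AddCommGroup X] [Module ℝ X]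
    (hinv : ∀ x y z : X, dist (x + z) (y + z) = dist x y)
    (hscale : ∀ l : ℝ, 0 ≤ l → l < 1 → ∀ x y : X, dist (l • x) (l • y) ≤ l * dist x y)
    (f : ℝ → X) {a b : ℝ} {P : TaggedPartition a b} (hP : P.MeshLT 1) (Q : TaggedPartition a b) :
    dist (riemannSum f P) (riemannSum f Q) ≤ ∑ p ∈ Finset.range P.n ×ˢ Finset.range Q.n,
      volume.real (P.piece p.1 ∩ Q.piece p.2) * dist (f (P.s p.1)) (f (Q.s p.2)) := by
  have hc (p) (hp : p ∈ Finset.range P.n ×ˢ Finset.range Q.n) :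
      0 ≤ volume.real (P.piece p.1 ∩ Q.piece p.2) ∧ volume.real (P.piece p.1 ∩ Q.piece p.2) < 1 := by
    have hp1 : p.1 < P.n := Finset.mem_range.mp (Finset.mem_product.mp hp).1
    refine ⟨measureReal_nonneg, ?_⟩
    calc volume.real (P.piece p.1 ∩ Q.piece p.2) ≤ volume.real (P.piece p.1) :=
          measureReal_mono inter_subset_left measure_Ico_lt_top.ne
      _ = P.t (p.1 + 1) - P.t p.1 := P.measureReal_piece hp1
      _ < 1 := hP _ hp1
  convert dist_sum_smul_le hinv hscale _ _ hc (fun p ↦ f (P.s p.1)) (fun p ↦ f (Q.s p.2)) using 2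
  · rw [riemannSum_eq_sum_measureReal_inter f P Q, Finset.sum_product]
  · rw [riemannSum_eq_sum_measureReal_inter f Q P, Finset.sum_product_right]
    simp only [inter_comm (Q.piece _)]

theorem dist_riemannSum_le {X : Type*} [MetricSpace X] [AddCommGroup X] [Module ℝ X]
    (hinv : ∀ x y z : X, dist (x + z) (y + z) = dist x y)
    (hscale : ∀ l : ℝ, 0 ≤ l → l < 1 → ∀ x y : X, dist (l • x) (l • y) ≤ l * dist x y)
    {f : ℝ → X} {a b L δ ε : ℝ} {U : Set ℝ} (hL : ∀ t ∈ Icc a b, dist 0 (f t) ≤ L)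
    (hε : 0 ≤ ε) (hδ : δ ≤ 1)
    (hf : ∀ z ∈ Icc a b \ U, ∀ p ∈ Icc a b, ∀ q ∈ Icc a b, dist p z < δ → dist q z < δ →
      dist (f p) (f q) < ε)
    {P Q : TaggedPartition a b} (hP : P.MeshLT δ) (hQ : Q.MeshLT δ) :
    dist (riemannSum f P) (riemannSum f Q) ≤ (b - a) * ε + 2 * L * volume.real (U ∩ Ico a b) := by
  classical
  set S := Finset.range P.n ×ˢ Finset.range Q.n
  set c : ℕ × ℕ → ℝ := fun p ↦ volume.real (P.piece p.1 ∩ Q.piece p.2)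
  set d : ℕ × ℕ → ℝ := fun p ↦ dist (f (P.s p.1)) (f (Q.s p.2))
  have hS {p : ℕ × ℕ} (hp : p ∈ S) : p.1 < P.n ∧ p.2 < Q.n := by
    simpa only [S, Finset.mem_product, Finset.mem_range] using hp
  set good := S.filter fun p ↦ ∃ z ∈ P.piece p.1 ∩ Q.piece p.2, z ∉ U
  set bad := S.filter fun p ↦ ¬ ∃ z ∈ P.piece p.1 ∩ Q.piece p.2, z ∉ U
  have hgood (p) (hp : p ∈ good) : d p < ε := by
    obtain ⟨hpS, z, ⟨hzP, hzQ⟩, hzU⟩ := Finset.mem_filter.mp hp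
    exact hf z ⟨Ico_subset_Icc_self (P.piece_subset_Ico (hS hpS).1 hzP), hzU⟩
      _ (P.s_mem_Icc (hS hpS).1) _ (Q.s_mem_Icc (hS hpS).2)
      (P.dist_s_lt_of_mem_piece hP (hS hpS).1 hzP) (Q.dist_s_lt_of_mem_piece hQ (hS hpS).2 hzQ)
  have hbad (p) (hp : p ∈ S) : d p ≤ 2 * L :=
    calc d p ≤ dist 0 (f (P.s p.1)) + dist 0 (f (Q.s p.2)) := dist_triangle_left _ _ _
      _ ≤ 2 * L := by linarith [hL _ (P.s_mem_Icc (hS hp).1), hL _ (Q.s_mem_Icc (hS hp).2)]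
  have hbad_cells : ∑ p ∈ bad, c p ≤ volume.real (U ∩ Ico a b) := by
    refine P.sum_measureReal_inter_le Q (Finset.filter_subset _ _)
      (measure_ne_top_of_subset inter_subset_right measure_Ico_lt_top.ne) fun p hp z hz ↦ ?_
    obtain ⟨hpS, hp⟩ := Finset.mem_filter.mp hp
    simp only [not_exists, not_and, not_not] at hp
    exact ⟨hp z hz, P.piece_subset_Ico (hS hpS).1 hz.1⟩
  have hL0 : 0 ≤ L := dist_nonneg.trans (hL _ (P.s_mem_Icc P.npos))
  calc dist (riemannSum f P) (riemannSum f Q) ≤ ∑ p ∈ S, c p * d p :=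
        dist_riemannSum_le_sum hinv hscale f (hP.mono hδ) Q
    _ = ∑ p ∈ good, c p * d p + ∑ p ∈ bad, c p * d p :=
        (Finset.sum_filter_add_sum_filter_not _ _ _).symm
    _ ≤ ∑ p ∈ good, c p * ε + ∑ p ∈ bad, c p * (2 * L) := by
        gcongr with p hp p hp
        · exact (hgood p hp).le
        · exact hbad p (Finset.mem_filter.mp hp).1
    _ ≤ (∑ p ∈ S, c p) * ε + 2 * L * volume.real (U ∩ Ico a b) := by
        rw [← Finset.sum_mul, ← Finset.sum_mul, mul_comm _ (2 * L)]
        gcongr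
        exact Finset.filter_subset _ _
    _ = (b - a) * ε + 2 * L * volume.real (U ∩ Ico a b) := by
        rw [Finset.sum_product, sum_sum_measureReal_inter]

/-- a bounded, almost everywhere continuous function with values
in a vector space with a complete invariant metric satisfying the scaling
inequality is Riemann integrable. -/
theorem riemannIntegrable_of_bounded_ae_continuous
    {X : Type*} [MetricSpace X] [AddCommGroup X] [Module ℝ X] [CompleteSpace X]
    (hinv : ∀ x y z : X, dist (x + z) (y + z) = dist x y)
    (hscale : ∀ l : ℝ, 0 ≤ l → l < 1 → ∀ x y : X, dist (l • x) (l • y) ≤ l * dist x y)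
    (a b : ℝ) (hab : a < b) (f : ℝ → X)
    (hbdd : ∃ L, ∀ t ∈ Set.Icc a b, dist 0 (f t) ≤ L)
    (hae : volume {t ∈ Set.Icc a b | ¬ ContinuousWithinAt f (Set.Icc a b) t} = 0) :
    ∃ x, HasRiemannIntegral f a b x := by
  obtain ⟨L, hL⟩ := hbdd
  have hL0 : 0 ≤ L := dist_nonneg.trans (hL a (left_mem_Icc.mpr hab.le))
  refine exists_hasRiemannIntegral_of_cauchy hab fun ε hε ↦ ?_
  obtain ⟨η, hη, hLη⟩ : ∃ η > 0, 2 * L * η < ε / 2 := ⟨ε / (4 * (L + 1)), by positivity, by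
    rw [← mul_div_assoc, div_lt_div_iff₀ (by positivity) two_pos]; nlinarith⟩
  obtain ⟨U, hDU, hU, hUη⟩ := Set.exists_isOpen_lt_of_lt _ (ENNReal.ofReal η)
    (hae ▸ ENNReal.ofReal_pos.mpr hη)
  have hcont : ∀ z ∈ Icc a b \ U, ContinuousWithinAt f (Icc a b) z :=
    fun z hz ↦ not_not.mp fun h ↦ hz.2 (hDU ⟨hz.1, h⟩)
  obtain ⟨δ, hδ, hf⟩ := (isCompact_Icc.diff hU).exists_forall_dist_lt_of_continuousWithinAt hcont
    (show 0 < ε / (4 * (b - a)) by have := sub_pos.2 hab; positivity)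
  refine ⟨min δ 1, by positivity, fun P Q hP hQ ↦ ?_⟩
  have hUab : volume.real (U ∩ Ico a b) ≤ η :=
    ENNReal.toReal_le_of_le_ofReal hη.le ((measure_mono inter_subset_left).trans hUη.le)
  calc dist (riemannSum f P) (riemannSum f Q)
      ≤ (b - a) * (ε / (4 * (b - a))) + 2 * L * volume.real (U ∩ Ico a b) :=
        dist_riemannSum_le hinv hscale hL (by positivity) (min_le_right _ _)
          (fun z hz p hp q hq hpz hqz ↦ hf z hz p hp q hq (hpz.trans_le (min_le_left _ _))
            (hqz.trans_le (min_le_left _ _))) hP hQ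
    _ ≤ ε / 4 + 2 * L * η := by
        rw [mul_div_left_comm, div_mul_cancel_right₀ (sub_pos.2 hab).ne', div_eq_mul_inv]
        gcongr
    _ < ε := by linarith
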